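/- arXiv:1705.09057 — 5 statements merged into one kernel-verified Lean document; each statement's English description precedes it below -/
import Mathlib

section
/- For any real numbers L, U and any α ∈ {L, U}, the identity 1 - f(L)f(U) + α(f(L) + f(U)) = (1 + f(L)f(U)) * sqrt(1 + α^2) holds, where f(x) = (sqrt(1+x^2)-1)/x for x ≠ 0 and f(0) = 0. -/
noncomputable def f (x : ℝ) : ℝ := if x = 0 then 0 else (Real.sqrt (1 + x ^ 2) - 1) / x

lemma key (x z : ℝ) : 1 - f x * z + x * (f x + z) = (1 + f x * z) * Real.sqrt (1 + x ^ 2) := by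
  rcases eq_or_ne x 0 with h | h
  · subst h
    simp [f]
  · have hpos : (0:ℝ) ≤ 1 + x ^ 2 := by positivity
    have hs : Real.sqrt (1 + x ^ 2) ^ 2 = 1 + x ^ 2 := Real.sq_sqrt hpos
    simp only [f, if_neg h]
    field_simp
    linear_combination (-z) * hs

theorem angle_identity (L U α : ℝ) (hα : α = L ∨ α = U) :
    1 - f L * f U + α * (f L + f U) = (1 + f L * f U) * Real.sqrt (1 + α ^ 2) := by
  rcases hα with h | h <;> rw [h]
  · exact key L (f U)
  · rw [mul_comm (f L) (f U), add_comm (f L) (f U)]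
    exact key U (f L)
end

section
/- Let 0 ≤ L₁ ≤ W₁ ≤ U₁ and 0 ≤ L₂ ≤ W₂ ≤ U₂ be real numbers. Then sqrt(W₁ W₂) * (sqrt L₁ + sqrt U₁)(sqrt L₂ + sqrt U₂) - sqrt(L₁ L₂ U₁ U₂) - sqrt(L₂ U₂) W₁ - sqrt(L₁ U₁) W₂ ≥ W₁ W₂. -/
open Real

lemma key_s5 (L W U : ℝ) (h0 : 0 ≤ L) (h1 : L ≤ W) (h2 : W ≤ U) :
    W + Real.sqrt (L * U) ≤ Real.sqrt W * (Real.sqrt L + Real.sqrt U) := by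
  have hW : 0 ≤ W := h0.trans h1
  have hU : 0 ≤ U := hW.trans h2
  rw [Real.sqrt_mul h0]
  have hx := Real.sqrt_le_sqrt h1
  have hy := Real.sqrt_le_sqrt h2
  have hkey : 0 ≤ (Real.sqrt W - Real.sqrt L) * (Real.sqrt U - Real.sqrt W) :=
    mul_nonneg (by linarith) (by linarith)
  have hW2 : Real.sqrt W * Real.sqrt W = W := Real.mul_self_sqrt hW
  nlinarith [hkey, hW2]

theorem sqrt_secant_prod (L₁ W₁ U₁ L₂ W₂ U₂ : ℝ)
    (h01 : 0 ≤ L₁) (h11 : L₁ ≤ W₁) (h21 : W₁ ≤ U₁)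
    (h02 : 0 ≤ L₂) (h12 : L₂ ≤ W₂) (h22 : W₂ ≤ U₂) :
    Real.sqrt (W₁ * W₂) * ((Real.sqrt L₁ + Real.sqrt U₁) * (Real.sqrt L₂ + Real.sqrt U₂))
      - Real.sqrt (L₁ * L₂ * U₁ * U₂) - Real.sqrt (L₂ * U₂) * W₁ - Real.sqrt (L₁ * U₁) * W₂
      ≥ W₁ * W₂ := by
  have hW₁ : 0 ≤ W₁ := h01.trans h11
  have hW₂ : 0 ≤ W₂ := h02.trans h12
  have k1 := key_s5 L₁ W₁ U₁ h01 h11 h21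
  have k2 := key_s5 L₂ W₂ U₂ h02 h12 h22
  have hb1 : 0 ≤ W₁ + Real.sqrt (L₁ * U₁) := by positivity
  have hb2 : 0 ≤ W₂ + Real.sqrt (L₂ * U₂) := by positivity
  have hprod : (W₁ + Real.sqrt (L₁ * U₁)) * (W₂ + Real.sqrt (L₂ * U₂)) ≤
      (Real.sqrt W₁ * (Real.sqrt L₁ + Real.sqrt U₁)) *
      (Real.sqrt W₂ * (Real.sqrt L₂ + Real.sqrt U₂)) :=
    mul_le_mul k1 k2 hb2 (mul_nonneg (Real.sqrt_nonneg _) (by positivity))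
  have hs : Real.sqrt (W₁ * W₂) = Real.sqrt W₁ * Real.sqrt W₂ := Real.sqrt_mul hW₁ _
  have hs2 : Real.sqrt (L₁ * L₂ * U₁ * U₂) = Real.sqrt (L₁ * U₁) * Real.sqrt (L₂ * U₂) := by
    rw [show L₁ * L₂ * U₁ * U₂ = (L₁ * U₁) * (L₂ * U₂) by ring,
      Real.sqrt_mul (mul_nonneg h01 (h01.trans (h11.trans h21)))]
  rw [hs, hs2]
  nlinarith [hprod]
end

section
/- Let L ≤ U be real numbers with f(x) = (sqrt(1+x^2)-1)/x for x ≠ 0 and f(0)=0. Define g(α) = 1 - f(L)f(U) + α(f(L)+f(U)) - (1 + f(L)f(U)) sqrt(1+α^2). Then g is concave on ℝ. -/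
/-! Since `|f| ≤ 1`, the coefficient `1 + f L * f U` is nonnegative, so `g` is an affine function
minus a nonnegative multiple of the convex function `α ↦ √(1 + α²)`. -/

open Set

theorem f_eq_div_sqrt_add_one (x : ℝ) : f x = x / (√(1 + x ^ 2) + 1) := by
  unfold f
  split_ifs with hx
  · simp [hx]
  · rw [div_eq_div_iff hx (by positivity)]
    linear_combination Real.sq_sqrt (by positivity : (0 : ℝ) ≤ 1 + x ^ 2)

theorem abs_f_le_one (x : ℝ) : |f x| ≤ 1 := by
  rw [f_eq_div_sqrt_add_one, abs_div, abs_of_pos (by positivity : 0 < √(1 + x ^ 2) + 1),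
    div_le_one (by positivity)]
  calc |x| = √(x ^ 2) := (Real.sqrt_sq_eq_abs x).symm
    _ ≤ √(1 + x ^ 2) := Real.sqrt_le_sqrt (by linarith)
    _ ≤ √(1 + x ^ 2) + 1 := le_add_of_nonneg_right zero_le_one

theorem one_add_f_mul_f_nonneg (x y : ℝ) : 0 ≤ 1 + f x * f y := by
  have h : |f x * f y| ≤ 1 := by
    rw [abs_mul]
    exact mul_le_one₀ (abs_f_le_one x) (abs_nonneg _) (abs_f_le_one y)
  linarith [neg_le_of_abs_le h]

theorem convexOn_sqrt_one_add_sq : ConvexOn ℝ univ (fun α : ℝ => √(1 + α ^ 2)) := by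
  -- `√(1 + α²) = ‖1 + α i‖`: a norm composed with an affine map.
  have h := (convexOn_norm (E := ℂ) convex_univ).comp_affineMap (AffineMap.lineMap 1 (1 + Complex.I))
  refine h.congr fun α _ => ?_
  simpa [AffineMap.lineMap_apply, add_comm] using Complex.norm_add_mul_I 1 α

theorem concaveOn_add_mul_sub_mul_sqrt_one_add_sq (a b : ℝ) {c : ℝ} (hc : 0 ≤ c) :
    ConcaveOn ℝ univ (fun α : ℝ => a + α * b - c * √(1 + α ^ 2)) :=
  ((concaveOn_const a convex_univ).add ((LinearMap.mulRight ℝ b).concaveOn convex_univ)).sub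
    (convexOn_sqrt_one_add_sq.smul hc)

theorem g_concave_general (L U : ℝ) :
    ConcaveOn ℝ Set.univ (fun α : ℝ =>
      1 - f L * f U + α * (f L + f U) - (1 + f L * f U) * Real.sqrt (1 + α ^ 2)) :=
  concaveOn_add_mul_sub_mul_sqrt_one_add_sq _ _ (one_add_f_mul_f_nonneg L U)

theorem g_concave (L U : ℝ) (hLU : L ≤ U) :
    ConcaveOn ℝ Set.univ (fun α : ℝ =>
      1 - f L * f U + α * (f L + f U) - (1 + f L * f U) * Real.sqrt (1 + α ^ 2)) :=
  g_concave_general L U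
end

section
/- Let L ≤ U be real numbers and define g(α) = 1 - f(L)f(U) + α(f(L)+f(U)) - (1 + f(L)f(U)) sqrt(1+α^2), with f(x) = (sqrt(1+x^2)-1)/x for x ≠ 0 and f(0)=0. Then g(α) ≥ 0 for all α with L ≤ α ≤ U. -/
/-!
Writing `x = tan θ`, `f x = tan (θ / 2)`. In terms of `t = f α` one has `α = 2t / (1 - t²)` and
`√(1 + α²) = (1 + t²) / (1 - t²)`, and the expression becomes `2 (t - f L) (f U - t) / (1 - t²)`,
which is nonnegative because `|t| < 1` and `f` is increasing, being the inverse of the increasing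
map `t ↦ 2t / (1 - t²)` on `(-1, 1)`.
-/

open Real Set

lemma one_le_sqrt_one_add_sq (x : ℝ) : 1 ≤ √(1 + x ^ 2) :=
  one_le_sqrt.2 (le_add_of_nonneg_right (sq_nonneg x))

lemma f_eq_div (x : ℝ) : f x = x / (1 + √(1 + x ^ 2)) := by
  rcases eq_or_ne x 0 with rfl | hx
  · simp [f]
  have hs := sq_sqrt (show 0 ≤ 1 + x ^ 2 by positivity)
  have := one_le_sqrt_one_add_sq x
  rw [f, if_neg hx, div_eq_div_iff hx (by linarith)]
  linear_combination hs

lemma f_sq_lt_one (x : ℝ) : f x ^ 2 < 1 := by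
  have hs := sq_sqrt (show 0 ≤ 1 + x ^ 2 by positivity)
  have := one_le_sqrt_one_add_sq x
  rw [f_eq_div, div_pow, div_lt_one (by positivity)]
  nlinarith

lemma f_mem_Ioo (x : ℝ) : f x ∈ Ioo (-1) 1 :=
  abs_lt.1 (sq_lt_one_iff_abs_lt_one _ |>.1 (f_sq_lt_one x))

lemma two_mul_f_div_one_sub_f_sq (x : ℝ) : 2 * f x / (1 - f x ^ 2) = x := by
  have hs := sq_sqrt (show 0 ≤ 1 + x ^ 2 by positivity)
  have := one_le_sqrt_one_add_sq x
  rw [div_eq_iff (sub_ne_zero.2 (f_sq_lt_one x).ne'), f_eq_div]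
  field_simp
  linear_combination -x * hs

lemma one_add_f_sq_div_one_sub_f_sq (x : ℝ) : (1 + f x ^ 2) / (1 - f x ^ 2) = √(1 + x ^ 2) := by
  have hs := sq_sqrt (show 0 ≤ 1 + x ^ 2 by positivity)
  have := one_le_sqrt_one_add_sq x
  rw [div_eq_iff (sub_ne_zero.2 (f_sq_lt_one x).ne'), f_eq_div]
  field_simp
  linear_combination -(1 + √(1 + x ^ 2)) * hs

lemma strictMonoOn_two_mul_div_one_sub_sq :
    StrictMonoOn (fun t : ℝ => 2 * t / (1 - t ^ 2)) (Ioo (-1) 1) := by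
  rintro s ⟨hs₁, hs₂⟩ t ⟨ht₁, ht₂⟩ hst
  have hs : 0 < 1 - s ^ 2 := by nlinarith
  have ht : 0 < 1 - t ^ 2 := by nlinarith
  rw [div_lt_div_iff₀ hs ht]
  nlinarith [mul_pos (sub_pos.2 hst) (show 0 < 1 + s * t by nlinarith)]

lemma f_strictMono : StrictMono f := fun x y hxy =>
  (strictMonoOn_two_mul_div_one_sub_sq.lt_iff_lt (f_mem_Ioo x) (f_mem_Ioo y)).1 <| by
    simpa only [two_mul_f_div_one_sub_f_sq] using hxy

lemma sub_mul_sqrt_one_add_sq_eq (a b x : ℝ) :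
    1 - a * b + x * (a + b) - (1 + a * b) * √(1 + x ^ 2)
      = 2 * (f x - a) * (b - f x) / (1 - f x ^ 2) := by
  have ht : 1 - f x ^ 2 ≠ 0 := sub_ne_zero.2 (f_sq_lt_one x).ne'
  rw [← one_add_f_sq_div_one_sub_f_sq, eq_div_iff ht]
  nth_rewrite 1 [← two_mul_f_div_one_sub_f_sq x]
  field_simp
  ring

theorem g_nonneg_general (L U α : ℝ) (h1 : L ≤ α) (h2 : α ≤ U) :
    1 - f L * f U + α * (f L + f U) - (1 + f L * f U) * Real.sqrt (1 + α ^ 2) ≥ 0 := by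
  rw [sub_mul_sqrt_one_add_sq_eq]
  have hL : 0 ≤ f α - f L := sub_nonneg.2 (f_strictMono.monotone h1)
  have hU : 0 ≤ f U - f α := sub_nonneg.2 (f_strictMono.monotone h2)
  have hα : 0 ≤ 1 - f α ^ 2 := sub_nonneg.2 (f_sq_lt_one α).le
  positivity

theorem g_nonneg (L U α : ℝ) (hLU : L ≤ U) (h1 : L ≤ α) (h2 : α ≤ U) :
    1 - f L * f U + α * (f L + f U) - (1 + f L * f U) * Real.sqrt (1 + α ^ 2) ≥ 0 :=
  g_nonneg_general L U α h1 h2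
end

section
/- A nonzero Hermitian positive semidefinite n×n complex matrix Y (with n > 1) has rank one if and only if every 2×2 principal minor of Y, i.e. Y_{ii} Y_{jj} - Y_{ij} Y_{ji} for all i ≠ j, equals zero. -/
/-!
Factor `Y = Bᴴ B`, so that `Y` is the Gram matrix of the columns `v i` of `B`. Its rank is then
the dimension of the span of the `v i`, and its `2 × 2` principal minor at `i, j` is the Gram
determinant of the pair `v i, v j`, which vanishes exactly when the pair is linearly dependent.
Since `Y ≠ 0`, some `v k` is nonzero, and the span is a line precisely when all pairs are dependent.
-/

open Module Submodule Set Matrix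
open scoped InnerProductSpace ComplexOrder

theorem finrank_span_range_eq_one_iff {K V ι : Type*} [Field K] [AddCommGroup V] [Module K V]
    {v : ι → V} (hv : v ≠ 0) :
    finrank K (span K (range v)) = 1 ↔ Pairwise fun i j ↦ ¬LinearIndependent K ![v i, v j] := by
  constructor
  · intro h i j _ hij
    have : Module.Finite K (span K (range v)) := Module.finite_of_finrank_eq_succ h
    have hle : span K (range ![v i, v j]) ≤ span K (range v) :=
      span_mono <| range_subset_iff.mpr fun l ↦ by fin_cases l <;> simp
    have := finrank_mono hle
    rw [finrank_span_eq_card hij, h] at this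
    simp at this
  · intro h
    obtain ⟨k, hk⟩ := Function.ne_iff.mp hv
    suffices span K (range v) = K ∙ v k by rw [this, finrank_span_singleton hk]
    refine le_antisymm (span_le.mpr ?_) (span_le.mpr (by simpa using subset_span (mem_range_self k)))
    rintro _ ⟨j, rfl⟩
    obtain rfl | hjk := eq_or_ne j k
    · exact mem_span_singleton_self _
    obtain ⟨a, ha⟩ := not_forall_not.mp ((LinearIndependent.pair_iff' hk).not.mp (h hjk.symm))
    exact mem_span_singleton.mpr ⟨a, ha⟩

section Gram

variable {𝕜 E n : Type*} [RCLike 𝕜] [NormedAddCommGroup E] [InnerProductSpace 𝕜 E] [Fintype n]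

theorem inner_self_mul_inner_self_sub_inner_mul_inner_eq_zero_iff {x y : E} :
    ⟪x, x⟫_𝕜 * ⟪y, y⟫_𝕜 - ⟪x, y⟫_𝕜 * ⟪y, x⟫_𝕜 = 0 ↔ ¬LinearIndependent 𝕜 ![x, y] := by
  rw [← det_gram_ne_zero_iff_linearIndependent, not_not, det_fin_two]
  simp

theorem Matrix.ker_mulVecLin_gram (v : n → E) :
    LinearMap.ker (gram 𝕜 v).mulVecLin = LinearMap.ker (Fintype.linearCombination 𝕜 v) := by
  ext c
  rw [LinearMap.mem_ker, LinearMap.mem_ker, mulVecLin_apply,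
    ← (posSemidef_gram 𝕜 v).dotProduct_mulVec_zero_iff, star_dotProduct_gram_mulVec,
    inner_self_eq_zero, Fintype.linearCombination_apply]

theorem Matrix.rank_gram (v : n → E) :
    (gram 𝕜 v).rank = finrank 𝕜 (span 𝕜 (range v)) := by
  have hgram := (gram 𝕜 v).mulVecLin.finrank_range_add_finrank_ker
  have hcomb := (Fintype.linearCombination 𝕜 v).finrank_range_add_finrank_ker
  rw [ker_mulVecLin_gram, ← hcomb, add_left_inj] at hgram
  rw [rank, hgram, Fintype.range_linearCombination]

end Gram

open scoped MatrixOrder in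
theorem Matrix.PosSemidef.exists_eq_gram {𝕜 n : Type*} [RCLike 𝕜] [Fintype n] {A : Matrix n n 𝕜}
    (hA : A.PosSemidef) : ∃ v : n → EuclideanSpace 𝕜 n, A = gram 𝕜 v := by
  classical
  obtain ⟨B, rfl⟩ := CStarAlgebra.nonneg_iff_eq_star_mul_self.mp hA.nonneg
  refine ⟨fun j ↦ WithLp.toLp 2 (B.col j), ?_⟩
  ext i j
  simp [mul_apply, PiLp.inner_apply, mul_comm]

open scoped ComplexOrder in
theorem rank_one_iff_principal_minors_general {n : ℕ}
    (Y : Matrix (Fin n) (Fin n) ℂ) (hP : Y.PosSemidef) (hY : Y ≠ 0) :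
    Y.rank = 1 ↔ ∀ i j : Fin n, i ≠ j → Y i i * Y j j - Y i j * Y j i = 0 := by
  obtain ⟨v, rfl⟩ := hP.exists_eq_gram
  have hv : v ≠ 0 := by
    rintro rfl
    exact hY gram_zero
  simp only [rank_gram, finrank_span_range_eq_one_iff hv, gram_apply,
    inner_self_mul_inner_self_sub_inner_mul_inner_eq_zero_iff]
  rfl

open scoped ComplexOrder in
theorem rank_one_iff_principal_minors {n : ℕ} (hn : 1 < n)
    (Y : Matrix (Fin n) (Fin n) ℂ) (hH : Y.IsHermitian) (hP : Y.PosSemidef) (hY : Y ≠ 0) :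
    Y.rank = 1 ↔ ∀ i j : Fin n, i ≠ j → Y i i * Y j j - Y i j * Y j i = 0 :=
  rank_one_iff_principal_minors_general Y hP hY
end
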